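/- For x ∈ ℝ^n with x ≠ 0 and a norm f, the closure of the descent cone { z : ∃ t > 0, f(x + t z) ≤ f(x) } equals the polar of cone(∂f(x)). -/

import Mathlib

open Pointwise Set

set_option linter.unusedSectionVars false

namespace DescentAux

variable {n : ℕ}

noncomputable def N (f : EuclideanSpace ℝ (Fin n) → ℝ) (x w : EuclideanSpace ℝ (Fin n)) : ℝ :=
  sInf ((fun t : ℝ => (f (x + t • w) - f x) / t) '' Set.Ioi 0)

variable {f : EuclideanSpace ℝ (Fin n) → ℝ} {x : EuclideanSpace ℝ (Fin n)}

section basic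

variable (hhom : ∀ (a : ℝ) z, f (a • z) = |a| * f z)
  (htri : ∀ z w, f (z + w) ≤ f z + f w)

include hhom htri

lemma f_zero : f 0 = 0 := by
  have := hhom 0 0
  simpa using this

lemma qne (w : EuclideanSpace ℝ (Fin n)) :
    ((fun t : ℝ => (f (x + t • w) - f x) / t) '' Set.Ioi 0).Nonempty :=
  ⟨_, ⟨1, by norm_num, rfl⟩⟩

lemma qbdd (w : EuclideanSpace ℝ (Fin n)) :
    BddBelow ((fun t : ℝ => (f (x + t • w) - f x) / t) '' Set.Ioi 0) := by
  refine ⟨-(f w), ?_⟩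
  rintro _ ⟨t, ht, rfl⟩
  rw [Set.mem_Ioi] at ht
  have h1 : f x ≤ f (x + t • w) + t * f w := by
    have h2 := htri (x + t • w) (-(t • w))
    have h3 : f (-(t • w)) = t * f w := by
      rw [show -(t • w) = (-t) • w by rw [neg_smul], hhom, abs_of_neg (by linarith)]
      ring
    simpa [h3] using h2
  rw [le_div_iff₀ ht]
  nlinarith

lemma N_le_q (w : EuclideanSpace ℝ (Fin n)) {t : ℝ} (ht : 0 < t) :
    N f x w ≤ (f (x + t • w) - f x) / t :=
  csInf_le (qbdd hhom htri w) ⟨t, ht, rfl⟩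

lemma le_N (w : EuclideanSpace ℝ (Fin n)) {a : ℝ}
    (h : ∀ t : ℝ, 0 < t → a ≤ (f (x + t • w) - f x) / t) : a ≤ N f x w := by
  refine le_csInf (qne hhom htri w) ?_
  rintro _ ⟨t, ht, rfl⟩
  exact h t ht

lemma N_zero : N f x 0 = 0 := by
  apply le_antisymm
  · have := N_le_q (x := x) hhom htri 0 (t := 1) one_pos
    simpa using this
  · exact le_N hhom htri 0 (fun t ht => by simp)

lemma q_smul (w : EuclideanSpace ℝ (Fin n)) {c t : ℝ} (hc : 0 < c) (ht : 0 < t) :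
    (f (x + t • (c • w)) - f x) / t = c * ((f (x + (c * t) • w) - f x) / (c * t)) := by
  rw [smul_smul, mul_comm t c]
  field_simp

lemma N_hom {c : ℝ} (hc : 0 < c) (w : EuclideanSpace ℝ (Fin n)) :
    N f x (c • w) = c * N f x w := by
  apply le_antisymm
  · rw [← div_le_iff₀' hc]
    refine le_N hhom htri w (fun t ht => ?_)
    rw [div_le_iff₀' hc]
    have ht' : (0:ℝ) < t / c := div_pos ht hc
    have h1 := N_le_q (x := x) hhom htri (c • w) ht'
    rw [q_smul hhom htri w hc ht'] at h1
    have e : c * (t / c) = t := by field_simp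
    rwa [e] at h1
  · refine le_N hhom htri (c • w) (fun t ht => ?_)
    rw [q_smul hhom htri w hc ht]
    exact mul_le_mul_of_nonneg_left (N_le_q hhom htri w (mul_pos hc ht)) hc.le

lemma N_add (u v : EuclideanSpace ℝ (Fin n)) :
    N f x (u + v) ≤ N f x u + N f x v := by
  have key : ∀ t : ℝ, 0 < t → ∀ s : ℝ, 0 < s →
      N f x (u + v) ≤ (f (x + t • u) - f x) / t + (f (x + s • v) - f x) / s := by
    intro t ht s hs
    set r : ℝ := t * s / (t + s) with hr
    have hts : 0 < t + s := by linarith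
    have hrpos : 0 < r := div_pos (mul_pos ht hs) hts
    set lam : ℝ := s / (t + s) with hlam
    have hlam0 : 0 < lam := div_pos hs hts
    have hlam1 : 0 < 1 - lam := by
      rw [hlam]
      rw [sub_pos, div_lt_one hts]
      linarith
    have hcomb : x + r • (u + v) = lam • (x + t • u) + (1 - lam) • (x + s • v) := by
      have h1 : lam * t = r := by rw [hlam, hr]; ring
      have h2 : (1 - lam) * s = r := by
        rw [hlam, hr]
        field_simp
        try ring
      have h3 : r • (u + v) = (lam * t) • u + ((1 - lam) * s) • v := by
        rw [h1, h2]; module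
      rw [h3]
      module
    have hle : f (x + r • (u + v)) ≤ lam * f (x + t • u) + (1 - lam) * f (x + s • v) := by
      rw [hcomb]
      calc f (lam • (x + t • u) + (1 - lam) • (x + s • v))
          ≤ f (lam • (x + t • u)) + f ((1 - lam) • (x + s • v)) := htri _ _
        _ = lam * f (x + t • u) + (1 - lam) * f (x + s • v) := by
            rw [hhom, hhom, abs_of_pos hlam0, abs_of_pos hlam1]
    have h3 : N f x (u + v) ≤ (f (x + r • (u + v)) - f x) / r := N_le_q hhom htri _ hrpos
    have h4 : (f (x + r • (u + v)) - f x) / r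
        ≤ (f (x + t • u) - f x) / t + (f (x + s • v) - f x) / s := by
      rw [div_le_iff₀ hrpos]
      have e1 : ((f (x + t • u) - f x) / t + (f (x + s • v) - f x) / s) * r
          = lam * f (x + t • u) + (1 - lam) * f (x + s • v) - f x := by
        rw [hr, hlam]
        field_simp
        ring
      rw [e1]
      linarith
    exact h3.trans h4
  have step : ∀ t : ℝ, 0 < t →
      N f x (u + v) - (f (x + t • u) - f x) / t ≤ N f x v := by
    intro t ht
    refine le_N hhom htri v (fun s hs => ?_)
    have := key t ht s hs
    linarith
  have step2 : N f x (u + v) - N f x v ≤ N f x u := by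
    refine le_N hhom htri u (fun t ht => ?_)
    have := step t ht
    linarith
  linarith

lemma N_neg_dom (w : EuclideanSpace ℝ (Fin n)) {c : ℝ} :
    c * N f x w ≤ N f x (c • w) := by
  rcases lt_trichotomy c 0 with hc | hc | hc
  · have h0 : (0:ℝ) ≤ N f x w + N f x (-w) := by
      have := N_add (x := x) hhom htri w (-w)
      rw [add_neg_cancel, N_zero hhom htri] at this
      linarith
    have : c • w = (-c) • (-w) := by module
    rw [this, N_hom hhom htri (by linarith : (0:ℝ) < -c)]
    nlinarith
  · simp [hc, N_zero hhom htri]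
  · rw [N_hom hhom htri hc]

/-- existence of a subgradient achieving the directional derivative -/
lemma exists_subgrad (w : EuclideanSpace ℝ (Fin n)) (hw : w ≠ 0) :
    ∃ s : EuclideanSpace ℝ (Fin n),
      (∀ y, f x + (inner ℝ s (y - x) : ℝ) ≤ f y) ∧ (inner ℝ s w : ℝ) = N f x w := by
  have hdom : ∀ p : (LinearPMap.mkSpanSingleton (K := ℝ) (L := ℝ) (σ := RingHom.id ℝ) w (N f x w) hw).domain,
      (LinearPMap.mkSpanSingleton (K := ℝ) (L := ℝ) (σ := RingHom.id ℝ) w (N f x w) hw) p ≤ N f x p := by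
    rintro ⟨p, hp⟩
    obtain ⟨c, rfl⟩ := Submodule.mem_span_singleton.1 hp
    rw [LinearPMap.mkSpanSingleton'_apply, smul_eq_mul]
    exact N_neg_dom hhom htri w
  obtain ⟨g, hg1, hg2⟩ := exists_extension_of_le_sublinear
    (LinearPMap.mkSpanSingleton (K := ℝ) (L := ℝ) (σ := RingHom.id ℝ) w (N f x w) hw) (N f x)
    (fun c hc z => N_hom hhom htri hc z) (N_add hhom htri) hdom
  have hgw : g w = N f x w := by
    have h1 := hg1 ⟨w, Submodule.mem_span_singleton_self w⟩
    rw [LinearPMap.mkSpanSingleton_apply] at h1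
    exact h1
  set gc : EuclideanSpace ℝ (Fin n) →L[ℝ] ℝ := LinearMap.toContinuousLinearMap g with hgc
  set s := (InnerProductSpace.toDual ℝ (EuclideanSpace ℝ (Fin n))).symm gc with hs
  have hsy : ∀ y, (inner ℝ s y : ℝ) = g y := fun y => by
    rw [hs, InnerProductSpace.toDual_symm_apply]
    rfl
  refine ⟨s, fun y => ?_, by rw [hsy, hgw]⟩
  have h1 : g (y - x) ≤ N f x (y - x) := hg2 _
  have h2 : N f x (y - x) ≤ f y - f x := by
    have := N_le_q (x := x) hhom htri (y - x) (t := 1) one_pos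
    simpa using this
  rw [hsy]
  linarith

end basic

end DescentAux


open DescentAux



open Pointwise

/-- The closure of the nontrivial descent set of a norm f at x ≠ 0 equals the polar of
cone(∂f(x)). -/
theorem closure_descent_eq_polar_cone_subdiff (n : ℕ) (f : EuclideanSpace ℝ (Fin n) → ℝ)
    (hhom : ∀ (a : ℝ) z, f (a • z) = |a| * f z)
    (htri : ∀ z w, f (z + w) ≤ f z + f w)
    (hdef : ∀ z, f z = 0 → z = 0)
    (x : EuclideanSpace ℝ (Fin n)) (hx : x ≠ 0) :
    closure {z : EuclideanSpace ℝ (Fin n) | ∃ t > (0 : ℝ), f (x + t • z) ≤ f x}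
      = {z : EuclideanSpace ℝ (Fin n) |
          ∀ v ∈ ⋃ t ∈ Set.Ici (0 : ℝ),
              t • {s : EuclideanSpace ℝ (Fin n) | ∀ y, f x + (inner ℝ s (y - x) : ℝ) ≤ f y},
            (inner ℝ z v : ℝ) ≤ 0} := by
  classical
  set S : Set (EuclideanSpace ℝ (Fin n)) :=
    {s : EuclideanSpace ℝ (Fin n) | ∀ y, f x + (inner ℝ s (y - x) : ℝ) ≤ f y} with hS
  set U : Set (EuclideanSpace ℝ (Fin n)) := ⋃ t ∈ Set.Ici (0 : ℝ), t • S with hU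
  have hf0 : f 0 = 0 := f_zero hhom htri
  have hfx_pos : 0 < f x := by
    have h1 := htri x (-x)
    have h2 : f (-x) = f x := by
      have := hhom (-1) x; simpa using this
    rw [add_neg_cancel, hf0, h2] at h1
    rcases lt_or_eq_of_le (by linarith : (0:ℝ) ≤ f x) with h | h
    · exact h
    · exact absurd (hdef x h.symm) hx
  apply Set.Subset.antisymm
  · -- closure of descent set ⊆ polar
    apply closure_minimal
    · rintro z ⟨t, ht, hft⟩
      intro v hv
      rw [Set.mem_iUnion₂] at hv
      obtain ⟨r, hr, hvr⟩ := hv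
      obtain ⟨s, hsS, rfl⟩ := Set.mem_smul_set.mp hvr
      have h1 := hsS (x + t • z)
      rw [add_sub_cancel_left, real_inner_smul_right] at h1
      have h3 : (inner ℝ s z : ℝ) ≤ 0 := by nlinarith
      have h4 : (inner ℝ z (r • s) : ℝ) = r * (inner ℝ s z : ℝ) := by
        rw [real_inner_smul_right, real_inner_comm]
      rw [h4]
      exact mul_nonpos_iff.mpr (Or.inl ⟨Set.mem_Ici.mp hr, h3⟩)
    · have heq : {z : EuclideanSpace ℝ (Fin n) | ∀ v ∈ U, (inner ℝ z v : ℝ) ≤ 0}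
          = ⋂ v ∈ U, {z : EuclideanSpace ℝ (Fin n) | (inner ℝ z v : ℝ) ≤ 0} := by
        ext z; simp
      rw [heq]
      exact isClosed_biInter fun v _ =>
        isClosed_le (continuous_id.inner continuous_const) continuous_const
  · intro z hz
    have hz' : ∀ s ∈ S, (inner ℝ z s : ℝ) ≤ 0 := by
      intro s hs
      refine hz s (Set.mem_iUnion₂.mpr ⟨1, Set.mem_Ici.mpr zero_le_one, ?_⟩)
      exact Set.mem_smul_set.mpr ⟨s, hs, one_smul ℝ s⟩
    -- subgradient at x gives inner s x ≥ f x for s ∈ S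
    have hsx : ∀ s ∈ S, f x ≤ (inner ℝ s x : ℝ) := by
      intro s hs
      have h3 := hs 0
      rw [hf0, zero_sub, inner_neg_right] at h3
      linarith
    have claim : ∀ ε : ℝ, 0 < ε → z - ε • x ∈
        {z : EuclideanSpace ℝ (Fin n) | ∃ t > (0 : ℝ), f (x + t • z) ≤ f x} := by
      intro ε hε
      have hzne : z - ε • x ≠ 0 := by
        intro h0
        have hzx : z = ε • x := by rwa [sub_eq_zero] at h0
        obtain ⟨s₀, hs₀S, _⟩ := exists_subgrad hhom htri x hx
        have h1 := hz' s₀ hs₀S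
        rw [hzx, real_inner_smul_left, real_inner_comm] at h1
        have h2 := hsx s₀ hs₀S
        nlinarith
      by_contra hnd
      simp only [Set.mem_setOf_eq, not_exists, not_and] at hnd
      push_neg at hnd
      have hN0 : 0 ≤ N f x (z - ε • x) :=
        le_N hhom htri _ (fun t ht => div_nonneg (by linarith [hnd t ht]) ht.le)
      obtain ⟨s, hsS, hsw⟩ := exists_subgrad hhom htri (z - ε • x) hzne
      have h2 : (inner ℝ s z : ℝ) ≤ 0 := by rw [real_inner_comm]; exact hz' s hsS
      have h3 : f x ≤ (inner ℝ s x : ℝ) := hsx s hsS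
      have h5 : (inner ℝ s (z - ε • x) : ℝ) = (inner ℝ s z : ℝ) - ε * (inner ℝ s x : ℝ) := by
        rw [inner_sub_right, real_inner_smul_right]
      rw [hsw] at h5
      nlinarith
    have htend : Filter.Tendsto (fun k : ℕ => z - (1 / (k + 1 : ℝ)) • x)
        Filter.atTop (nhds z) := by
      have h1 : Filter.Tendsto (fun k : ℕ => (1 / (k + 1 : ℝ)) • x) Filter.atTop
          (nhds 0) := by
        have := (tendsto_one_div_add_atTop_nhds_zero_nat (𝕜 := ℝ)).smul_const x
        rwa [zero_smul] at this
      simpa using Filter.Tendsto.sub (tendsto_const_nhds (x := z)) h1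
    exact mem_closure_of_tendsto htend
      (Filter.Eventually.of_forall fun k => claim _ (by positivity))
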